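/- Let ℍ denote the hyperbolic upper half-plane and for φ ∈ ℝ let A(φ) ∈ SL(2,ℝ) be the rotation matrix with rows (cos φ, sin φ) and (−sin φ, cos φ), acting on ℍ by Möbius transformations; A(φ) fixes the point i and acts as the hyperbolic rotation about i by angle 2φ. If π/3 ≤ φ ≤ 2π/3, then for every z ∈ ℍ one has dist(z, A(φ)·z) ≥ √3 · dist(z, i). -/

import Mathlib

/-! Writing `w = A(φ)·z`, one computes `z - w = -sin φ · (z - i)(z + i) / (-sin φ · z + cos φ)`
and `Im w = Im z / |-sin φ · z + cos φ|²`, whence `sinh (d(z, w) / 2) = |sin φ| · sinh (d(z, i))`.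
For `π/3 ≤ φ ≤ 2π/3` we have `sin φ ≥ √3/2`, and convexity of `sinh` on `[0, ∞)` gives
`sinh (√3/2 · r) ≤ √3/2 · sinh r`; comparing, `d(z, w) / 2 ≥ √3/2 · d(z, i)`. -/

open UpperHalfPlane
open scoped MatrixGroups

/-- The rotation matrix `A(φ) = (cos φ, sin φ; −sin φ, cos φ)` as an element of `SL(2, ℝ)`. -/
noncomputable def rotationSL (φ : ℝ) : SL(2, ℝ) :=
  ⟨!![Real.cos φ, Real.sin φ; -Real.sin φ, Real.cos φ], by
    rw [Matrix.det_fin_two_of]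
    nlinarith [Real.sin_sq_add_cos_sq φ]⟩

open Real

lemma convexOn_sinh_Ici : ConvexOn ℝ (Set.Ici 0) sinh := by
  refine MonotoneOn.convexOn_of_deriv (convex_Ici 0) continuous_sinh.continuousOn
    differentiable_sinh.differentiableOn ?_
  rw [interior_Ici, Real.deriv_sinh]
  intro x hx y hy hxy
  rwa [cosh_le_cosh, abs_of_pos hx, abs_of_pos hy]

lemma sinh_mul_le_mul_sinh {t x : ℝ} (ht₀ : 0 ≤ t) (ht₁ : t ≤ 1) (hx : 0 ≤ x) :
    sinh (t * x) ≤ t * sinh x := by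
  simpa using convexOn_sinh_Ici.2 (Set.mem_Ici.2 hx) (Set.mem_Ici.2 le_rfl) ht₀
    (sub_nonneg.2 ht₁) (add_sub_cancel t 1)

lemma sqrt_three_div_two_le_sin {φ : ℝ} (h₁ : π / 3 ≤ φ) (h₂ : φ ≤ 2 * π / 3) :
    √3 / 2 ≤ sin φ := by
  rw [← cos_pi_div_six, ← cos_sub_pi_div_two, ← cos_abs (φ - π / 2)]
  exact cos_le_cos_of_nonneg_of_le_pi (abs_nonneg _) (by linarith [pi_pos])
    (abs_le.2 ⟨by linarith, by linarith⟩)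

lemma UpperHalfPlane.sinh_dist_I (z : ℍ) :
    sinh (dist z I) = ‖(z : ℂ) - Complex.I‖ * ‖(z : ℂ) + Complex.I‖ / (2 * z.im) := by
  rw [← mul_div_cancel₀ (dist z I) two_ne_zero, sinh_two_mul, sinh_half_dist, cosh_half_dist]
  simp only [Complex.dist_eq, coe_I, Complex.conj_I, sub_neg_eq_add, I_im, mul_one]
  field_simp
  rw [sq_sqrt z.im_pos.le]
  ring

lemma coe_rotationSL_smul (φ : ℝ) (z : ℍ) :
    ((rotationSL φ • z : ℍ) : ℂ) = (cos φ * z + sin φ) / (-sin φ * z + cos φ) := by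
  rw [coe_specialLinearGroup_apply]
  simp [rotationSL]

lemma im_rotationSL_smul (φ : ℝ) (z : ℍ) :
    (rotationSL φ • z).im = z.im / Complex.normSq (-sin φ * z + cos φ) := by
  rw [MulAction.compHom_smul_def, UpperHalfPlane.im_smul_eq_div_normSq]
  simp only [Matrix.SpecialLinearGroup.det_mapGL, Units.val_one, abs_one, one_mul, denom,
    Matrix.SpecialLinearGroup.mapGL_coe_matrix, Algebra.algebraMap_self,
    Matrix.SpecialLinearGroup.map_apply_coe, RingHom.mapMatrix_id, RingHom.id_apply]
  simp [rotationSL]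

lemma sinh_half_dist_rotationSL_smul (φ : ℝ) (z : ℍ) :
    sinh (dist z (rotationSL φ • z) / 2) = |sin φ| * sinh (dist z I) := by
  set D : ℂ := -sin φ * z + cos φ with hD
  have hD₀ : D ≠ 0 := by
    intro h
    have him := (rotationSL φ • z).im_pos
    rw [im_rotationSL_smul, ← hD, h] at him
    simp at him
  have hsub : (z : ℂ) - (rotationSL φ • z : ℍ) =
      -sin φ * ((z - Complex.I) * (z + Complex.I)) / D := by
    rw [coe_rotationSL_smul, ← hD, eq_div_iff hD₀, sub_mul, div_mul_cancel₀ _ hD₀, hD]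
    linear_combination (-(sin φ : ℂ)) * Complex.I_sq
  have hsqrt : √(z.im * (rotationSL φ • z).im) = z.im / ‖D‖ := by
    rw [im_rotationSL_smul, ← hD, ← Complex.sq_norm, ← sqrt_sq (by positivity : 0 ≤ z.im / ‖D‖)]
    ring_nf
  have hD_pos : 0 < ‖D‖ := norm_pos_iff.2 hD₀
  rw [sinh_half_dist, sinh_dist_I, Complex.dist_eq, hsub, hsqrt]
  simp only [norm_div, norm_mul, norm_neg, Complex.norm_real, norm_eq_abs]
  field_simp

/-- If `π/3 ≤ φ ≤ 2π/3` then the hyperbolic rotation `A(φ)` about `i` (by angle `2φ`)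
displaces every point `z ∈ ℍ` by at least `√3` times its distance to the center `i`. -/
theorem dist_rotation_smul_ge (φ : ℝ) (hφ₁ : Real.pi / 3 ≤ φ) (hφ₂ : φ ≤ 2 * Real.pi / 3)
    (z : ℍ) :
    dist z (rotationSL φ • z) ≥ Real.sqrt 3 * dist z UpperHalfPlane.I := by
  have hr : 0 ≤ dist z I := dist_nonneg
  have hsin := sqrt_three_div_two_le_sin hφ₁ hφ₂
  have key : sinh (√3 / 2 * dist z I) ≤ sinh (dist z (rotationSL φ • z) / 2) :=
    calc sinh (√3 / 2 * dist z I)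
        ≤ √3 / 2 * sinh (dist z I) :=
          sinh_mul_le_mul_sinh (by positivity) (hsin.trans (sin_le_one φ)) hr
      _ ≤ |sin φ| * sinh (dist z I) :=
          mul_le_mul_of_nonneg_right (hsin.trans (le_abs_self _)) (sinh_nonneg_iff.2 hr)
      _ = sinh (dist z (rotationSL φ • z) / 2) := (sinh_half_dist_rotationSL_smul φ z).symm
  rw [sinh_le_sinh] at key
  linarith
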